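/- arXiv:1611.05518 — 3 statements merged into one kernel-verified Lean document; each statement's English description precedes it below -/
import Mathlib

section
/- Let σ₁, σ₂ > 0, U > 0 and 0 < K < U, and let 𝐊 = U + (U − K)·σ₂/σ₁. Then for every τ > 0, the following strict inequalities hold: (K/U)·C^σ(U, 𝐊, τ) < P^σ(U, K, τ) < C^σ(U, 𝐊, τ). In words, in a PCLVG model with the spot at the barrier, the out-of-the-money put price is uniformly bounded above and below, at all maturities, by the prices of static portfolios each consisting of a single out-of-the-money call with strike 𝐊. -/
open MeasureTheory Filter Set

/-- Standard normal cumulative distribution function. -/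
noncomputable def stdNormalCDF (x : ℝ) : ℝ :=
  (Real.sqrt (2 * Real.pi))⁻¹ * ∫ y in Set.Iic x, Real.exp (-(y ^ 2) / 2)

/-- Black–Scholes call price with zero interest and dividend rates. -/
noncomputable def bsCall (S K τ σ : ℝ) : ℝ :=
  let d1 := (Real.log (S / K) + σ ^ 2 * τ / 2) / (σ * Real.sqrt τ)
  S * stdNormalCDF d1 - K * stdNormalCDF (d1 - σ * Real.sqrt τ)

/-- Black–Scholes put price with zero interest and dividend rates. -/
noncomputable def bsPut (S K τ σ : ℝ) : ℝ := bsCall S K τ σ - S + K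

/-- The denominator appearing in the PCLVG call price formula. -/
noncomputable def pclvgD (σ1 σ2 U τ : ℝ) : ℝ :=
  1 / σ1 + 1 / σ2 - (1 / σ2 - 1 / σ1) * Real.exp (-2 * U / (σ1 * τ))

/-- The explicit PCLVG call price `C^σ(U,K,τ)`. -/
noncomputable def pclvgCall (σ1 σ2 U K τ : ℝ) : ℝ :=
  if K < U then
    (U - K) +
      τ * Real.exp (-(U - K) / (σ1 * τ)) * (1 - Real.exp (-2 * K / (σ1 * τ))) /
        pclvgD σ1 σ2 U τ
  else
    τ * Real.exp (-(K - U) / (σ2 * τ)) * (1 - Real.exp (-2 * U / (σ1 * τ))) /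
      pclvgD σ1 σ2 U τ

/-- The PCLVG put price `P^σ(U,K,τ) = C^σ(U,K,τ) − (U − K)`. -/
noncomputable def pclvgPut (σ1 σ2 U K τ : ℝ) : ℝ := pclvgCall σ1 σ2 U K τ - (U - K)

/-!
With `c = τ e^{-(U-K)/(σ₁τ)} / D(τ) > 0`, the put is `P = c (1 - e^{-2K/(σ₁τ)})`, and the strike
`𝐊` is chosen so that `(𝐊 - U)/σ₂ = (U - K)/σ₁`, which makes the call `C(U,𝐊,τ) = c (1 - e^{-2U/(σ₁τ)})`.
The upper bound is then monotonicity of `x ↦ 1 - e^{-x}`, and the lower bound its strict concavity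
together with its vanishing at `0`.
-/

open Real

lemma mul_one_sub_exp_lt_mul_one_sub_exp {a x y : ℝ} (ha : 0 < a) (hx : 0 < x) (hxy : x < y) :
    x * (1 - exp (-a * y)) < y * (1 - exp (-a * x)) := by
  have hy : 0 < y := hx.trans hxy
  have hconv := strictConvexOn_exp.2 (mem_univ (-a * y)) (mem_univ 0)
    (by nlinarith) (div_pos hx hy) (sub_pos.2 ((div_lt_one hy).2 hxy)) (add_sub_cancel _ _)
  have hcomb : x / y * (-a * y) + (1 - x / y) * 0 = -a * x := by
    rw [mul_zero, add_zero]
    field_simp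
  have hscale : y * (x / y * exp (-a * y) + (1 - x / y) * 1) = x * exp (-a * y) + (y - x) := by
    field_simp
  simp only [smul_eq_mul] at hconv
  rw [hcomb, exp_zero] at hconv
  have := mul_lt_mul_of_pos_left hconv hy
  rw [hscale] at this
  linarith

lemma pclvgD_pos {σ1 σ2 U τ : ℝ} (h1 : 0 < σ1) (h2 : 0 < σ2) (hU : 0 ≤ U) (hτ : 0 < τ) :
    0 < pclvgD σ1 σ2 U τ := by
  have hE : exp (-2 * U / (σ1 * τ)) ≤ 1 :=
    exp_le_one_iff.2 (div_nonpos_of_nonpos_of_nonneg (by linarith) (by positivity))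
  have hE0 := exp_pos (-2 * U / (σ1 * τ))
  unfold pclvgD
  have : 0 < 1 / σ1 * (1 + exp (-2 * U / (σ1 * τ))) + 1 / σ2 * (1 - exp (-2 * U / (σ1 * τ))) :=
    add_pos_of_pos_of_nonneg (by positivity) (mul_nonneg (by positivity) (by linarith))
  linarith

lemma pclvgPut_of_lt {σ1 σ2 U K τ : ℝ} (hKU : K < U) :
    pclvgPut σ1 σ2 U K τ = τ * exp (-(U - K) / (σ1 * τ)) / pclvgD σ1 σ2 U τ *
      (1 - exp (-2 * K / (σ1 * τ))) := by
  rw [pclvgPut, pclvgCall, if_pos hKU]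
  ring

lemma pclvgCall_mirror_strike {σ1 σ2 U K τ : ℝ} (h1 : 0 < σ1) (h2 : 0 < σ2) (hKU : K ≤ U)
    (hτ : τ ≠ 0) :
    pclvgCall σ1 σ2 U (U + (U - K) * σ2 / σ1) τ = τ * exp (-(U - K) / (σ1 * τ)) /
      pclvgD σ1 σ2 U τ * (1 - exp (-2 * U / (σ1 * τ))) := by
  have hstrike : ¬ U + (U - K) * σ2 / σ1 < U := by
    have : 0 ≤ (U - K) * σ2 / σ1 := by positivity
    linarith
  have hexp : -(U + (U - K) * σ2 / σ1 - U) / (σ2 * τ) = -(U - K) / (σ1 * τ) := by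
    field_simp
    ring
  rw [pclvgCall, if_neg hstrike, hexp]
  ring

/-- In a PCLVG model with the spot at the barrier, the OTM put price is
strictly bounded between the prices of the two single-call static portfolios with strike
`𝐊 = U + (U−K)σ₂/σ₁`, for all maturities. -/
theorem pclvg_put_call_bounds (σ1 σ2 U K : ℝ)
    (h1 : 0 < σ1) (h2 : 0 < σ2) (hU : 0 < U) (hK : 0 < K) (hKU : K < U) :
    ∀ τ : ℝ, 0 < τ →
      K / U * pclvgCall σ1 σ2 U (U + (U - K) * σ2 / σ1) τ < pclvgPut σ1 σ2 U K τ ∧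
      pclvgPut σ1 σ2 U K τ < pclvgCall σ1 σ2 U (U + (U - K) * σ2 / σ1) τ := by
  intro τ hτ
  rw [pclvgPut_of_lt hKU, pclvgCall_mirror_strike h1 h2 hKU.le hτ.ne']
  have hc : 0 < τ * exp (-(U - K) / (σ1 * τ)) / pclvgD σ1 σ2 U τ :=
    div_pos (mul_pos hτ (exp_pos _)) (pclvgD_pos h1 h2 hU.le hτ)
  have hs : 0 < σ1 * τ := mul_pos h1 hτ
  constructor
  · have hconc := mul_one_sub_exp_lt_mul_one_sub_exp (div_pos two_pos hs) hK hKU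
    simp only [show ∀ x, -(2 / (σ1 * τ)) * x = -2 * x / (σ1 * τ) from fun x => by ring] at hconc
    rw [div_mul_eq_mul_div, div_lt_iff₀ hU]
    linarith [mul_lt_mul_of_pos_left hconc hc]
  · refine mul_lt_mul_of_pos_left (sub_lt_sub_left (exp_lt_exp.2 ?_) 1) hc
    exact div_lt_div_of_pos_right (by linarith) hs
end

section
/- Let σ₁, σ₂ > 0 and U > 0. The explicit PCLVG call prices satisfy the static no-arbitrage conditions: (i) for every τ > 0 and every K > 0, (U − K)^+ < C^σ(U,K,τ) < U; (ii) for every τ > 0, the map K ↦ C^σ(U,K,τ) is nonincreasing on (0,∞); (iii) for every τ > 0, the map K ↦ C^σ(U,K,τ) is convex on (0,∞); (iv) for every K > 0, the map τ ↦ C^σ(U,K,τ) is nondecreasing on (0,∞). -/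
open MeasureTheory Filter Set

/-!
Write `s = σ₁τ`, `t = σ₂τ` and `c = (cosh (U/s)/s + sinh (U/s)/t)⁻¹`. Then the call price is
`U − K + c sinh (K/s)` for `K < U` and `c sinh (U/s) e^{−(K−U)/t}` for `K ≥ U`, and this choice of
`c` makes both the branches and their derivatives agree at `K = U`. So the price is `C¹` in the
strike, its derivative `−1 + c cosh (K/s)/s`, resp. `−(c/t) sinh (U/s) e^{−(K−U)/t}`, is
nondecreasing and negative on `[0, ∞)`, and the price is convex and strictly decreasing there,
with value `U` at `K = 0`.

In the inverse maturity `w = 1/τ` the time value is `sinh (βw) / (w (cosh (γw)/σ₁ + sinh (γw)/σ₂))`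
with `β = K/σ₁ ≤ γ = U/σ₁` (and `β = γ`, times a factor increasing in `τ`, beyond the barrier).
Its reciprocal is the product of the positive nondecreasing functions `sinh (γw)/sinh (βw)` and
`w (coth (γw)/σ₁ + 1/σ₂)`; both monotonicities come from `x ↦ x coth x` being nondecreasing.
-/

open Real

theorem hasDerivAt_ite_lt {f g f' g' : ℝ → ℝ} {a : ℝ} (hf : ∀ x, HasDerivAt f (f' x) x)
    (hg : ∀ x, HasDerivAt g (g' x) x) (ha : f a = g a) (ha' : f' a = g' a) (x : ℝ) :
    HasDerivAt (fun y => if y < a then f y else g y) (if x < a then f' x else g' x) x := by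
  rcases lt_trichotomy x a with hx | rfl | hx
  · rw [if_pos hx]
    exact (hf x).congr_of_eventuallyEq
      ((eventually_lt_nhds hx).mono fun y hy => if_pos hy)
  · rw [if_neg (lt_irrefl x)]
    have hleft : HasDerivWithinAt (fun y => if y < x then f y else g y) (g' x) (Iic x) x := by
      rw [← ha']
      refine (hf x).hasDerivWithinAt.congr (fun y hy => ?_) (by simp [ha])
      rcases (mem_Iic.1 hy).lt_or_eq with hy | rfl
      · exact if_pos hy
      · simp [ha]
    have hright : HasDerivWithinAt (fun y => if y < x then f y else g y) (g' x) (Ici x) x :=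
      (hg x).hasDerivWithinAt.congr (fun y hy => if_neg (not_lt.2 hy)) (if_neg (lt_irrefl x))
    simpa using hleft.union hright
  · rw [if_neg (not_lt.2 hx.le)]
    exact (hg x).congr_of_eventuallyEq
      ((eventually_gt_nhds hx).mono fun y hy => if_neg (not_lt.2 hy.le))

theorem monotoneOn_mul_cosh_div_sinh : MonotoneOn (fun x => x * cosh x / sinh x) (Ioi 0) := by
  have hderiv : ∀ x ∈ Ioi (0 : ℝ), HasDerivAt (fun x => x * cosh x / sinh x)
      (((1 * cosh x + x * sinh x) * sinh x - x * cosh x * cosh x) / sinh x ^ 2) x :=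
    fun x hx => ((hasDerivAt_id x).mul (hasDerivAt_cosh x)).div (hasDerivAt_sinh x)
      (sinh_pos_iff.2 hx).ne'
  refine monotoneOn_of_hasDerivWithinAt_nonneg (convex_Ioi 0)
    (fun x hx => (hderiv x hx).continuousAt.continuousWithinAt)
    (fun x hx => (hderiv x (interior_subset hx)).hasDerivWithinAt) fun x hx => ?_
  rw [interior_Ioi] at hx
  have hdouble : x ≤ sinh x * cosh x := by
    have := self_le_sinh_iff.2 (by linarith [mem_Ioi.1 hx] : (0 : ℝ) ≤ 2 * x)
    rw [sinh_two_mul] at this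
    linarith
  have hnum : (1 * cosh x + x * sinh x) * sinh x - x * cosh x * cosh x = sinh x * cosh x - x := by
    linear_combination -x * cosh_sq' x
  rw [hnum]
  exact div_nonneg (by linarith) (sq_nonneg _)

theorem one_sub_exp_neg_two_mul (x : ℝ) : 1 - exp (-2 * x) = 2 * exp (-x) * sinh x := by
  rw [sinh_eq, show -2 * x = -x + -x by ring, exp_add, exp_neg]
  field_simp

theorem monotoneOn_ite_lt {α β : Type*} [LinearOrder α] [Preorder β] {f g : α → β} {a : α}
    {D : Set α} (hf : MonotoneOn f D) (hg : MonotoneOn g D) (hfg : f a = g a) (ha : a ∈ D) :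
    MonotoneOn (fun x => if x < a then f x else g x) D := by
  intro x hx y hy hxy
  dsimp only
  split_ifs with hxa hya hya
  · exact hf hx hy hxy
  · exact (hf hx ha hxa.le).trans (hfg ▸ hg ha hy (not_lt.1 hya))
  · exact absurd (hxy.trans_lt hya) hxa
  · exact hg hx hy hxy

theorem monotoneOn_sinh_mul_div_sinh_mul {β γ : ℝ} (hβ : 0 < β) (hβγ : β ≤ γ) :
    MonotoneOn (fun w => sinh (γ * w) / sinh (β * w)) (Ioi 0) := by
  have hderiv : ∀ w ∈ Ioi (0 : ℝ), HasDerivAt (fun w => sinh (γ * w) / sinh (β * w))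
      ((cosh (γ * w) * γ * sinh (β * w) - sinh (γ * w) * (cosh (β * w) * β)) /
        sinh (β * w) ^ 2) w := by
    intro w hw
    have hlin : ∀ c : ℝ, HasDerivAt (fun w => c * w) c w := fun c => by
      simpa using (hasDerivAt_id w).const_mul c
    exact (hlin γ).sinh.div (hlin β).sinh (sinh_pos_iff.2 (mul_pos hβ hw)).ne'
  refine monotoneOn_of_hasDerivWithinAt_nonneg (convex_Ioi 0)
    (fun w hw => (hderiv w hw).continuousAt.continuousWithinAt)
    (fun w hw => (hderiv w (interior_subset hw)).hasDerivWithinAt) fun w hw => ?_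
  rw [interior_Ioi] at hw
  have hw : 0 < w := hw
  have hβw := mul_pos hβ hw
  have hγw := mul_pos (hβ.trans_le hβγ) hw
  have hcoth := monotoneOn_mul_cosh_div_sinh hβw hγw (mul_le_mul_of_nonneg_right hβγ hw.le)
  rw [div_le_div_iff₀ (sinh_pos_iff.2 hβw) (sinh_pos_iff.2 hγw)] at hcoth
  refine div_nonneg ((mul_nonneg_iff_of_pos_left hw).1 ?_) (sq_nonneg _)
  linear_combination hcoth

theorem antitoneOn_sinh_mul_div_mul_cosh_add_sinh {p q β γ : ℝ} (hp : 0 < p) (hq : 0 ≤ q)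
    (hβ : 0 < β) (hβγ : β ≤ γ) :
    AntitoneOn (fun w => sinh (β * w) / (w * (p * cosh (γ * w) + q * sinh (γ * w)))) (Ioi 0) := by
  have hγ : 0 < γ := hβ.trans_le hβγ
  set S := fun w => sinh (γ * w) / sinh (β * w)
  set T := fun w => p * (w * cosh (γ * w) / sinh (γ * w)) + q * w
  have hS : MonotoneOn S (Ioi 0) := monotoneOn_sinh_mul_div_sinh_mul hβ hβγ
  have hT : MonotoneOn T (Ioi 0) := by
    intro u hu v hv huv
    have hcoth := monotoneOn_mul_cosh_div_sinh (mul_pos hγ hu) (mul_pos hγ hv)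
      (mul_le_mul_of_nonneg_left huv hγ.le)
    simp only [mul_div_assoc, mul_assoc] at hcoth
    simp only [T, mul_div_assoc]
    gcongr p * ?_ + q * ?_
    exact le_of_mul_le_mul_left hcoth hγ
  have hSpos : ∀ w ∈ Ioi (0 : ℝ), 0 < S w := fun w hw =>
    div_pos (sinh_pos_iff.2 (mul_pos hγ hw)) (sinh_pos_iff.2 (mul_pos hβ hw))
  have hTpos : ∀ w ∈ Ioi (0 : ℝ), 0 < T w := fun w (hw : 0 < w) => by
    have := sinh_pos_iff.2 (mul_pos hγ hw)
    have := cosh_pos (γ * w)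
    positivity
  have heq : EqOn (fun w => sinh (β * w) / (w * (p * cosh (γ * w) + q * sinh (γ * w))))
      (fun w => (S w * T w)⁻¹) (Ioi 0) := by
    intro w (hw : 0 < w)
    have := (sinh_pos_iff.2 (mul_pos hγ hw)).ne'
    have := (sinh_pos_iff.2 (mul_pos hβ hw)).ne'
    simp only [S, T]
    field_simp
  intro u hu v hv huv
  rw [heq hu, heq hv]
  exact inv_anti₀ (mul_pos (hSpos u hu) (hTpos u hu))
    (mul_le_mul (hS hu hv huv) (hT hu hv huv) (hTpos u hu).le (hSpos v hv).le)

noncomputable def pclvgCoeff (s t U : ℝ) : ℝ := (cosh (U / s) / s + sinh (U / s) / t)⁻¹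

noncomputable def pclvgProfile (s t U K : ℝ) : ℝ :=
  if K < U then U - K + pclvgCoeff s t U * sinh (K / s)
  else pclvgCoeff s t U * sinh (U / s) * exp (-(K - U) / t)

noncomputable def pclvgProfileDeriv (s t U K : ℝ) : ℝ :=
  if K < U then -1 + pclvgCoeff s t U * cosh (K / s) / s
  else -(pclvgCoeff s t U * sinh (U / s) / t * exp (-(K - U) / t))

section Profile

variable {s t U : ℝ}

theorem pclvgCoeff_pos (hs : 0 < s) (ht : 0 < t) (hU : 0 ≤ U) : 0 < pclvgCoeff s t U := by
  have := sinh_nonneg_iff.2 (div_nonneg hU hs.le)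
  have := cosh_pos (U / s)
  unfold pclvgCoeff
  positivity

theorem pclvgCoeff_mul_eq_one (hs : 0 < s) (ht : 0 < t) (hU : 0 ≤ U) :
    pclvgCoeff s t U * (cosh (U / s) / s + sinh (U / s) / t) = 1 :=
  inv_mul_cancel₀ (inv_pos.1 (pclvgCoeff_pos hs ht hU)).ne'

theorem hasDerivAt_pclvgProfile (hs : 0 < s) (ht : 0 < t) (hU : 0 ≤ U) (K : ℝ) :
    HasDerivAt (pclvgProfile s t U) (pclvgProfileDeriv s t U K) K := by
  set c := pclvgCoeff s t U
  have hleft : ∀ K, HasDerivAt (fun K => U - K + c * sinh (K / s))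
      (-1 + c * cosh (K / s) / s) K :=
    fun K =>
      (((hasDerivAt_id' K).const_sub U).add
        (((hasDerivAt_id' K).div_const s).sinh.const_mul c)).congr_deriv (by ring)
  have hright : ∀ K, HasDerivAt (fun K => c * sinh (U / s) * exp (-(K - U) / t))
      (-(c * sinh (U / s) / t * exp (-(K - U) / t))) K :=
    fun K =>
      (((((hasDerivAt_id' K).sub_const U).fun_neg.div_const t).exp).const_mul
        (c * sinh (U / s))).congr_deriv (by ring)
  refine hasDerivAt_ite_lt hleft hright (by simp) ?_ K
  simp only [sub_self, neg_zero, zero_div, exp_zero, mul_one]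
  linear_combination pclvgCoeff_mul_eq_one hs ht hU

theorem monotoneOn_pclvgProfileDeriv (hs : 0 < s) (ht : 0 < t) (hU : 0 ≤ U) :
    MonotoneOn (pclvgProfileDeriv s t U) (Ici 0) := by
  have hc := pclvgCoeff_pos hs ht hU
  have hsinh := sinh_nonneg_iff.2 (div_nonneg hU hs.le)
  refine monotoneOn_ite_lt (fun K₁ (hK₁ : 0 ≤ K₁) K₂ (hK₂ : 0 ≤ K₂) hK => ?_)
    (fun K₁ _ K₂ _ hK => ?_) ?_ hU
  · have : cosh (K₁ / s) ≤ cosh (K₂ / s) := by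
      rw [cosh_le_cosh, abs_of_nonneg (by positivity), abs_of_nonneg (by positivity)]
      gcongr
    gcongr
  · gcongr
  · simp only [sub_self, neg_zero, zero_div, exp_zero, mul_one]
    linear_combination pclvgCoeff_mul_eq_one hs ht hU

theorem pclvgProfileDeriv_neg (hs : 0 < s) (ht : 0 < t) (hU : 0 < U) {K : ℝ} (hK : 0 ≤ K) :
    pclvgProfileDeriv s t U K < 0 := by
  have hc := pclvgCoeff_pos hs ht hU.le
  have hsinh := sinh_pos_iff.2 (div_pos hU hs)
  calc pclvgProfileDeriv s t U K ≤ pclvgProfileDeriv s t U (max K U) :=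
        monotoneOn_pclvgProfileDeriv hs ht hU.le hK (hK.trans (le_max_left K U)) (le_max_left K U)
    _ < 0 := by
        rw [pclvgProfileDeriv, if_neg (not_lt.2 (le_max_right K U)), neg_lt_zero]
        positivity

theorem strictAntiOn_pclvgProfile (hs : 0 < s) (ht : 0 < t) (hU : 0 < U) :
    StrictAntiOn (pclvgProfile s t U) (Ici 0) := by
  have hderiv := hasDerivAt_pclvgProfile hs ht hU.le
  refine strictAntiOn_of_hasDerivWithinAt_neg (convex_Ici 0)
    (fun K _ => (hderiv K).continuousAt.continuousWithinAt)
    (fun K _ => (hderiv K).hasDerivWithinAt) fun K hK => ?_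
  exact pclvgProfileDeriv_neg hs ht hU (interior_subset hK)

theorem convexOn_pclvgProfile (hs : 0 < s) (ht : 0 < t) (hU : 0 ≤ U) :
    ConvexOn ℝ (Ici 0) (pclvgProfile s t U) := by
  have hderiv := hasDerivAt_pclvgProfile hs ht hU
  refine MonotoneOn.convexOn_of_deriv (convex_Ici 0)
    (fun K _ => (hderiv K).continuousAt.continuousWithinAt)
    (fun K _ => (hderiv K).differentiableAt.differentiableWithinAt) ?_
  rw [funext fun K => (hderiv K).deriv]
  exact (monotoneOn_pclvgProfileDeriv hs ht hU).mono interior_subset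

theorem max_sub_lt_pclvgProfile (hs : 0 < s) (ht : 0 < t) (hU : 0 < U) {K : ℝ} (hK : 0 < K) :
    max (U - K) 0 < pclvgProfile s t U K := by
  have hc := pclvgCoeff_pos hs ht hU.le
  unfold pclvgProfile
  split_ifs with hKU
  · have := sinh_pos_iff.2 (div_pos hK hs)
    rw [max_eq_left (by linarith)]
    linarith [mul_pos hc this]
  · have := sinh_pos_iff.2 (div_pos hU hs)
    rw [max_eq_right (by linarith)]
    positivity

theorem pclvgProfile_lt (hs : 0 < s) (ht : 0 < t) (hU : 0 < U) {K : ℝ} (hK : 0 < K) :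
    pclvgProfile s t U K < U := by
  have h := strictAntiOn_pclvgProfile hs ht hU self_mem_Ici hK.le hK
  simpa [pclvgProfile, hU] using h

end Profile

theorem pclvgD_eq (σ1 σ2 U τ : ℝ) :
    pclvgD σ1 σ2 U τ =
      2 * exp (-(U / (σ1 * τ))) * (cosh (U / (σ1 * τ)) / σ1 + sinh (U / (σ1 * τ)) / σ2) := by
  rw [pclvgD, show -2 * U / (σ1 * τ) = -(U / (σ1 * τ)) + -(U / (σ1 * τ)) by ring, exp_add,
    cosh_eq, sinh_eq, exp_neg]
  field_simp
  ring

theorem pclvgCoeff_scale_eq {σ1 σ2 U τ : ℝ} (h1 : 0 < σ1) (h2 : 0 < σ2) (hU : 0 ≤ U)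
    (hτ : 0 < τ) :
    pclvgCoeff (σ1 * τ) (σ2 * τ) U =
      τ / (cosh (U / (σ1 * τ)) / σ1 + sinh (U / (σ1 * τ)) / σ2) := by
  have := cosh_pos (U / (σ1 * τ))
  have := sinh_nonneg_iff.2 (by positivity : 0 ≤ U / (σ1 * τ))
  unfold pclvgCoeff
  field_simp

theorem pclvgCall_eq_pclvgProfile {σ1 σ2 U τ : ℝ} (h1 : 0 < σ1) (h2 : 0 < σ2) (hU : 0 ≤ U)
    (hτ : 0 < τ) (K : ℝ) : pclvgCall σ1 σ2 U K τ = pclvgProfile (σ1 * τ) (σ2 * τ) U K := by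
  have := cosh_pos (U / (σ1 * τ))
  have := sinh_nonneg_iff.2 (by positivity : 0 ≤ U / (σ1 * τ))
  unfold pclvgCall pclvgProfile
  rw [pclvgD_eq, pclvgCoeff_scale_eq h1 h2 hU hτ]
  split_ifs
  · rw [show -(U - K) / (σ1 * τ) = K / (σ1 * τ) + -(U / (σ1 * τ)) by ring,
      show -2 * K / (σ1 * τ) = -2 * (K / (σ1 * τ)) by ring, one_sub_exp_neg_two_mul, exp_add,
      exp_neg (K / (σ1 * τ))]
    field_simp
  · rw [show -2 * U / (σ1 * τ) = -2 * (U / (σ1 * τ)) by ring, one_sub_exp_neg_two_mul]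
    field_simp

theorem pclvgCoeff_mul_sinh_eq {σ1 σ2 U τ : ℝ} (h1 : 0 < σ1) (h2 : 0 < σ2) (hU : 0 ≤ U)
    (hτ : 0 < τ) (K : ℝ) :
    pclvgCoeff (σ1 * τ) (σ2 * τ) U * sinh (K / (σ1 * τ)) =
      sinh (K / σ1 * τ⁻¹) /
        (τ⁻¹ * (σ1⁻¹ * cosh (U / σ1 * τ⁻¹) + σ2⁻¹ * sinh (U / σ1 * τ⁻¹))) := by
  rw [pclvgCoeff_scale_eq h1 h2 hU hτ, show K / σ1 * τ⁻¹ = K / (σ1 * τ) by ring,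
    show U / σ1 * τ⁻¹ = U / (σ1 * τ) by ring]
  field_simp

theorem monotoneOn_pclvgCall_maturity {σ1 σ2 U K : ℝ} (h1 : 0 < σ1) (h2 : 0 < σ2) (hU : 0 < U)
    (hK : 0 < K) : MonotoneOn (fun τ => pclvgCall σ1 σ2 U K τ) (Ioi 0) := by
  intro τ₁ (hτ₁ : 0 < τ₁) τ₂ (hτ₂ : 0 < τ₂) hτ
  have hR : ∀ β, 0 < β → β ≤ U / σ1 → _ := fun β hβ hβU =>
    antitoneOn_sinh_mul_div_mul_cosh_add_sinh (inv_pos.2 h1) (inv_pos.2 h2).le hβ hβU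
      (inv_pos.2 hτ₂) (inv_pos.2 hτ₁) (inv_anti₀ hτ₁ hτ)
  beta_reduce at hR ⊢
  rw [pclvgCall_eq_pclvgProfile h1 h2 hU.le hτ₁, pclvgCall_eq_pclvgProfile h1 h2 hU.le hτ₂,
    pclvgProfile, pclvgProfile]
  split_ifs with hKU
  · rw [pclvgCoeff_mul_sinh_eq h1 h2 hU.le hτ₁, pclvgCoeff_mul_sinh_eq h1 h2 hU.le hτ₂]
    exact add_le_add_right (hR _ (div_pos hK h1) (div_le_div_of_nonneg_right hKU.le h1.le)) _
  · have hsinh := sinh_nonneg_iff.2 (by positivity : 0 ≤ U / (σ1 * τ₂))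
    refine mul_le_mul ?_ ?_ (exp_pos _).le
      (mul_nonneg (pclvgCoeff_pos (by positivity) (by positivity) hU.le).le hsinh)
    · rw [pclvgCoeff_mul_sinh_eq h1 h2 hU.le hτ₁, pclvgCoeff_mul_sinh_eq h1 h2 hU.le hτ₂]
      exact hR _ (div_pos hU h1) le_rfl
    · have : 0 ≤ K - U := sub_nonneg.2 (not_lt.1 hKU)
      rw [neg_div, neg_div]
      gcongr

/-- Static no-arbitrage properties of the PCLVG call prices:
(i) `(U−K)⁺ < C^σ(U,K,τ) < U`; (ii) nonincreasing in the strike; (iii) convex in the strike;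
(iv) nondecreasing in the maturity. -/
theorem pclvg_static_no_arbitrage (σ1 σ2 U : ℝ)
    (h1 : 0 < σ1) (h2 : 0 < σ2) (hU : 0 < U) :
    (∀ τ K : ℝ, 0 < τ → 0 < K →
      max (U - K) 0 < pclvgCall σ1 σ2 U K τ ∧ pclvgCall σ1 σ2 U K τ < U) ∧
    (∀ τ : ℝ, 0 < τ → AntitoneOn (fun K => pclvgCall σ1 σ2 U K τ) (Set.Ioi 0)) ∧
    (∀ τ : ℝ, 0 < τ → ConvexOn ℝ (Set.Ioi 0) (fun K => pclvgCall σ1 σ2 U K τ)) ∧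
    (∀ K : ℝ, 0 < K → MonotoneOn (fun τ => pclvgCall σ1 σ2 U K τ) (Set.Ioi 0)) := by
  have hprofile : ∀ τ, 0 < τ →
      (fun K => pclvgCall σ1 σ2 U K τ) = pclvgProfile (σ1 * τ) (σ2 * τ) U :=
    fun τ hτ => funext (pclvgCall_eq_pclvgProfile h1 h2 hU.le hτ)
  refine ⟨fun τ K hτ hK => ?_, fun τ hτ => ?_, fun τ hτ => ?_,
    fun K hK => monotoneOn_pclvgCall_maturity h1 h2 hU hK⟩
  · rw [pclvgCall_eq_pclvgProfile h1 h2 hU.le hτ]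
    exact ⟨max_sub_lt_pclvgProfile (mul_pos h1 hτ) (mul_pos h2 hτ) hU hK,
      pclvgProfile_lt (mul_pos h1 hτ) (mul_pos h2 hτ) hU hK⟩
  · rw [hprofile τ hτ]
    exact (strictAntiOn_pclvgProfile (mul_pos h1 hτ) (mul_pos h2 hτ) hU).antitoneOn.mono
      Ioi_subset_Ici_self
  · rw [hprofile τ hτ]
    exact (convexOn_pclvgProfile (mul_pos h1 hτ) (mul_pos h2 hτ) hU.le).subset
      Ioi_subset_Ici_self (convex_Ioi 0)
end

section
/- Let U > 0, 0 < K₁ < U, K₂ = U²/K₁, τ > 0, and let σ_a ≥ σ_b > 0 be implied volatilities with nonnegative skew (i.e. the out-of-the-money put implied volatility σ_a dominates the out-of-the-money call implied volatility σ_b). Then P^bs(U, K₁, τ, σ_a) − (K₁/U) · C^bs(U, K₂, τ, σ_b) ≥ 0. -/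
open MeasureTheory Filter Set

/-!
In terms of the total volatility `s = σ√τ`, put–call symmetry reads
`P(U, K₁, s) = (K₁/U) · C(U, U²/K₁, s)`, so the portfolio is worth `P(U, K₁, s_a) − P(U, K₁, s_b)`.
The call (hence the put) price is strictly increasing in `s`: the identity `K φ(d₂) = S φ(d₁)`
collapses its derivative to the vega `S φ(d₁) > 0`.
-/

open Real

noncomputable def stdNormalPDF (x : ℝ) : ℝ :=
  (√(2 * π))⁻¹ * exp (-(x ^ 2) / 2)

lemma integrable_exp_neg_sq_div_two : Integrable (fun y : ℝ => exp (-(y ^ 2) / 2)) := by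
  convert integrable_exp_neg_mul_sq (b := (1 : ℝ) / 2) (by norm_num) using 2 with y
  ring_nf

lemma integral_exp_neg_sq_div_two : ∫ y : ℝ, exp (-(y ^ 2) / 2) = √(2 * π) := by
  convert integral_gaussian ((1 : ℝ) / 2) using 2 with y
  · ring_nf
  · ring

lemma stdNormalCDF_neg (x : ℝ) : stdNormalCDF (-x) = 1 - stdNormalCDF x := by
  have hint := integrable_exp_neg_sq_div_two
  have h_reflect : ∫ y in Iic (-x), exp (-(y ^ 2) / 2) = ∫ y in Ioi x, exp (-(y ^ 2) / 2) := by
    have := integral_comp_neg_Iic (-x) (fun y => exp (-(y ^ 2) / 2))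
    simp only [neg_sq, neg_neg] at this
    exact this
  have h_split : (∫ y in Iic x, exp (-(y ^ 2) / 2)) + ∫ y in Ioi x, exp (-(y ^ 2) / 2)
      = √(2 * π) := by
    rw [intervalIntegral.integral_Iic_add_Ioi hint.integrableOn hint.integrableOn,
      integral_exp_neg_sq_div_two]
  have hpos : 0 < √(2 * π) := by positivity
  rw [stdNormalCDF, stdNormalCDF, h_reflect, eq_sub_of_add_eq' h_split, mul_sub,
    inv_mul_cancel₀ hpos.ne']

lemma hasDerivAt_stdNormalCDF (x : ℝ) : HasDerivAt stdNormalCDF (stdNormalPDF x) x := by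
  have hint := integrable_exp_neg_sq_div_two
  have h_eq : stdNormalCDF = fun z => (√(2 * π))⁻¹ *
      ((∫ y in Iic 0, exp (-(y ^ 2) / 2)) + ∫ y in (0 : ℝ)..z, exp (-(y ^ 2) / 2)) := by
    ext z
    rw [stdNormalCDF, ← intervalIntegral.integral_Iic_sub_Iic hint.integrableOn hint.integrableOn,
      add_sub_cancel]
  have hFTC : HasDerivAt (fun z => ∫ y in (0 : ℝ)..z, exp (-(y ^ 2) / 2)) (exp (-(x ^ 2) / 2)) x :=
    intervalIntegral.integral_hasDerivAt_right hint.intervalIntegrable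
      hint.aestronglyMeasurable.stronglyMeasurableAtFilter (by fun_prop)
  rw [h_eq]
  exact (hFTC.const_add _).const_mul _

lemma stdNormalPDF_pos (x : ℝ) : 0 < stdNormalPDF x := by
  unfold stdNormalPDF
  positivity

lemma mul_stdNormalPDF_log_div_sub_half {S K s : ℝ} (hS : 0 < S) (hK : 0 < K) (hs : s ≠ 0) :
    K * stdNormalPDF (log (S / K) / s - s / 2) = S * stdNormalPDF (log (S / K) / s + s / 2) := by
  have h_exponent : -((log (S / K) / s - s / 2) ^ 2) / 2
      = -((log (S / K) / s + s / 2) ^ 2) / 2 + log (S / K) := by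
    field_simp
    ring
  rw [stdNormalPDF, stdNormalPDF, h_exponent, exp_add, exp_log (by positivity)]
  field_simp

/-- Black–Scholes call price as a function of the total volatility `s = σ√τ`. -/
noncomputable def bsCallTotalVol (S K s : ℝ) : ℝ :=
  S * stdNormalCDF (log (S / K) / s + s / 2) - K * stdNormalCDF (log (S / K) / s - s / 2)

lemma hasDerivAt_bsCallTotalVol {S K s : ℝ} (hS : 0 < S) (hK : 0 < K) (hs : s ≠ 0) :
    HasDerivAt (bsCallTotalVol S K) (S * stdNormalPDF (log (S / K) / s + s / 2)) s := by
  set m := log (S / K)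
  have hd1 : HasDerivAt (fun s => m / s + s / 2) (-m / s ^ 2 + 1 / 2) s :=
    (((hasDerivAt_inv hs).const_mul m).fun_add ((hasDerivAt_id' s).div_const 2)).congr_deriv
      (by ring)
  have hd2 : HasDerivAt (fun s => m / s - s / 2) (-m / s ^ 2 - 1 / 2) s :=
    (((hasDerivAt_inv hs).const_mul m).fun_sub ((hasDerivAt_id' s).div_const 2)).congr_deriv
      (by ring)
  refine ((((hasDerivAt_stdNormalCDF _).comp s hd1).const_mul S).fun_sub
    (((hasDerivAt_stdNormalCDF _).comp s hd2).const_mul K)).congr_deriv ?_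
  linear_combination (m / s ^ 2 + 1 / 2) * mul_stdNormalPDF_log_div_sub_half hS hK hs

lemma strictMonoOn_bsCallTotalVol {S K : ℝ} (hS : 0 < S) (hK : 0 < K) :
    StrictMonoOn (bsCallTotalVol S K) (Ioi 0) := by
  have hderiv : ∀ s ∈ Ioi (0 : ℝ), HasDerivAt (bsCallTotalVol S K) _ s := fun s hs =>
    hasDerivAt_bsCallTotalVol hS hK (ne_of_gt hs)
  refine strictMonoOn_of_deriv_pos (convex_Ioi 0)
    (fun s hs => (hderiv s hs).continuousAt.continuousWithinAt) fun s hs => ?_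
  rw [interior_Ioi] at hs
  rw [(hderiv s hs).deriv]
  exact mul_pos hS (stdNormalPDF_pos _)

lemma bsCall_eq_bsCallTotalVol (S K σ : ℝ) {τ : ℝ} (hτ : 0 ≤ τ) :
    bsCall S K τ σ = bsCallTotalVol S K (σ * √τ) := by
  have hd1 : ∀ m s : ℝ, (m + s ^ 2 / 2) / s = m / s + s / 2 := fun m s => by
    rcases eq_or_ne s 0 with rfl | hs
    · simp
    · field_simp
  have hvar : σ ^ 2 * τ = (σ * √τ) ^ 2 := by rw [mul_pow, sq_sqrt hτ]
  simp only [bsCall, bsCallTotalVol, hvar, hd1]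
  ring_nf

/-- Put–call symmetry: `P(S, K) = (K / S) · C(S, S² / K)`. -/
lemma div_mul_bsCallTotalVol_sq_div {S K : ℝ} (hS : 0 < S) (hK : 0 < K) (s : ℝ) :
    K / S * bsCallTotalVol S (S ^ 2 / K) s = bsCallTotalVol S K s - S + K := by
  have hlog : log (S / (S ^ 2 / K)) = -log (S / K) := by
    rw [← log_inv]
    congr 1
    field_simp
  have hd1 : -log (S / K) / s + s / 2 = -(log (S / K) / s - s / 2) := by ring
  have hd2 : -log (S / K) / s - s / 2 = -(log (S / K) / s + s / 2) := by ring
  rw [bsCallTotalVol, bsCallTotalVol, hlog, hd1, hd2, stdNormalCDF_neg, stdNormalCDF_neg]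
  field_simp
  ring

theorem bs_skew_risk_reversal_nonneg_general (U K1 τ σa σb : ℝ)
    (hU : 0 < U) (hK1 : 0 < K1) (hτ : 0 < τ)
    (hσb : 0 < σb) (hab : σb ≤ σa) :
    0 ≤ bsPut U K1 τ σa - K1 / U * bsCall U (U ^ 2 / K1) τ σb := by
  have hsb : 0 < σb * √τ := by positivity
  have hmono := (strictMonoOn_bsCallTotalVol hU hK1).monotoneOn hsb
    (hsb.trans_le (by gcongr) : 0 < σa * √τ) (by gcongr : σb * √τ ≤ σa * √τ)
  rw [bsPut, bsCall_eq_bsCallTotalVol _ _ _ hτ.le, bsCall_eq_bsCallTotalVol _ _ _ hτ.le,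
    div_mul_bsCallTotalVol_sq_div hU hK1]
  linarith

/-- With nonnegative implied skew (`σ_a ≥ σ_b > 0`), the risk-reversal
portfolio long the OTM put struck at `K₁ < U` and short `K₁/U` OTM calls struck at `K₂ = U²/K₁`
has a nonnegative price. -/
theorem bs_skew_risk_reversal_nonneg (U K1 τ σa σb : ℝ)
    (hU : 0 < U) (hK1 : 0 < K1) (hK1U : K1 < U) (hτ : 0 < τ)
    (hσb : 0 < σb) (hab : σb ≤ σa) :
    0 ≤ bsPut U K1 τ σa - K1 / U * bsCall U (U ^ 2 / K1) τ σb :=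
  bs_skew_risk_reversal_nonneg_general U K1 τ σa σb hU hK1 hτ hσb hab
end
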